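/- arXiv:2407.14801 — 5 statements merged into one kernel-verified Lean document; each statement's English description precedes it below -/
import Mathlib

section
/- For any n ≥ 100, m = ⌈√n⌉, any i ∈ {1,…,m}, and any real t ≥ 1: under μ_n^m, Pr[n_i ≥ t·√n] ≤ e^{−0.9 t + 0.1}. -/
/-!
Shortening the `i`-th gap by `d` (moving every later pivot down by `d`) injects the event
`n_i > d` into the pivot sets for `n - d`, so its probability is at most
`C(n-1-d, m-1) / C(n-1, m-1) ≤ (1 - (m-1)/(n-1))^d ≤ exp (-(m-1) d / (n-1))`.
With `d = ⌈t√n⌉ - 1` and `m ≥ √n`, the exponent is at least `0.9 t - 0.1` once `√n ≥ 9`.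
-/

open Finset

/-- Pivot list: p₀ = 1, then the sorted pivots, then p_m = n+1. -/
def pivotList (n : ℕ) (P : Finset ℕ) : List ℕ :=
  1 :: (P.sort (· ≤ ·)) ++ [n + 1]

/-- The i-th gap (bucket size) nᵢ = pᵢ − pᵢ₋₁, for i = 1,…,m. -/
def gap (n : ℕ) (P : Finset ℕ) (i : ℕ) : ℕ :=
  (pivotList n P).getD i 0 - (pivotList n P).getD (i - 1) 0

/-- Sample space of μ_n^m : all (m−1)-element subsets of {2,…,n}. -/
def pivotSets (n m : ℕ) : Finset (Finset ℕ) :=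
  (Finset.Icc 2 n).powersetCard (m - 1)

theorem Finset.sort_image_of_strictMonoOn {α β : Type*} [LinearOrder α] [LinearOrder β]
    {s : Finset α} {f : α → β} (hf : StrictMonoOn f s) :
    (s.image f).sort (· ≤ ·) = (s.sort (· ≤ ·)).map f := by
  have hlt : ((s.sort (· ≤ ·)).map f).Pairwise (· < ·) :=
    List.pairwise_map.mpr <| (s.sortedLT_sort.pairwise).imp_of_mem fun ha hb hab =>
      hf (mem_sort _ |>.mp ha) (mem_sort _ |>.mp hb) hab
  rw [← (List.toFinset_sort _ (hlt.imp ne_of_lt)).mpr (hlt.imp le_of_lt)]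
  congr 1
  ext
  simp

lemma Nat.choose_pred_le_mul (r : ℕ) {M N : ℕ} (hMN : M ≤ N) :
    ((M - 1).choose r : ℝ) ≤ M.choose r * (1 - r / N) := by
  rcases M with _ | M
  · rcases r with _ | r <;> simp
  · have hsucc : (M.choose r : ℝ) * (M + 1) = (M + 1).choose r * ((M + 1 : ℝ) - r) := by
      rcases le_or_gt r (M + 1) with hr | hr
      · have h := Nat.choose_mul_succ_eq M r
        rw [← Nat.cast_inj (R := ℝ)] at h
        push_cast [Nat.cast_sub hr] at h
        exact h
      · simp [Nat.choose_eq_zero_of_lt hr, Nat.choose_eq_zero_of_lt (Nat.lt_of_succ_lt hr)]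
    have hN : (r : ℝ) / N ≤ r / (M + 1) :=
      div_le_div_of_nonneg_left (by positivity) (by positivity) (by exact_mod_cast hMN)
    calc ((M + 1 - 1).choose r : ℝ) = (M + 1).choose r * (1 - r / (M + 1)) := by
          rw [Nat.add_sub_cancel]
          field_simp
          linear_combination hsucc
      _ ≤ (M + 1).choose r * (1 - r / N) := by gcongr

lemma Nat.choose_sub_le_mul_exp (N r k : ℕ) :
    ((N - k).choose r : ℝ) ≤ N.choose r * Real.exp (-(r * k / N)) := by
  induction k with
  | zero => simp
  | succ k ih =>
    calc ((N - (k + 1)).choose r : ℝ) = ((N - k - 1).choose r : ℝ) := by rw [Nat.sub_succ']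
      _ ≤ (N - k).choose r * (1 - r / N) := Nat.choose_pred_le_mul r (Nat.sub_le N k)
      _ ≤ (N - k).choose r * Real.exp (-(r / N)) := by gcongr; exact Real.one_sub_le_exp_neg _
      _ ≤ N.choose r * Real.exp (-(r * k / N)) * Real.exp (-(r / N)) := by gcongr
      _ = N.choose r * Real.exp (-(r * (k + 1 : ℕ) / N)) := by
          rw [mul_assoc, ← Real.exp_add]; push_cast; ring_nf

section Pivots

variable {n : ℕ} {P : Finset ℕ}

def pivot (n : ℕ) (P : Finset ℕ) (j : ℕ) : ℕ := (pivotList n P).getD j 0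

lemma length_pivotList : (pivotList n P).length = #P + 2 := by
  simp [pivotList]

lemma sortedLE_pivotList (hP : P ⊆ Icc 2 n) : (pivotList n P).SortedLE := by
  have hmem (x) (hx : x ∈ P.sort (· ≤ ·)) : 2 ≤ x ∧ x ≤ n :=
    mem_Icc.mp (hP (mem_sort _ |>.mp hx))
  refine (List.pairwise_append.mpr ⟨List.pairwise_cons.mpr ⟨fun x hx => ?_,
    P.pairwise_sort _⟩, List.pairwise_singleton _ _, fun x hx y hy => ?_⟩).sortedLE
  · exact one_le_two.trans (hmem x hx).1
  · rw [List.mem_singleton.mp hy]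
    rcases List.mem_cons.mp hx with rfl | hx
    · exact Nat.le_add_left 1 n
    · exact (hmem x hx).2.trans (Nat.le_succ n)

lemma pivot_zero : pivot n P 0 = 1 := rfl

lemma pivot_card_add_one : pivot n P (#P + 1) = n + 1 := by
  simp [pivot, pivotList, List.getD_eq_getElem?_getD]

lemma pivot_add_one (j : ℕ) (hj : j < #P) :
    pivot n P (j + 1) = (P.sort (· ≤ ·))[j]'(by simpa using hj) := by
  simp [pivot, pivotList, List.getD_eq_getElem?_getD, List.getElem?_append_left, hj]

lemma pivot_mono (hP : P ⊆ Icc 2 n) {j k : ℕ} (hjk : j ≤ k) (hk : k ≤ #P + 1) :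
    pivot n P j ≤ pivot n P k := by
  have hl := length_pivotList (n := n) (P := P)
  rw [pivot, pivot, List.getD_eq_getElem _ _ (by omega : j < (pivotList n P).length),
    List.getD_eq_getElem _ _ (by omega : k < (pivotList n P).length)]
  exact (sortedLE_pivotList hP).getElem_le_getElem_of_le hjk

lemma le_pivot_or_pivot_le (hP : P ⊆ Icc 2 n) {i x : ℕ} (hi : 1 ≤ i) (hi' : i ≤ #P + 1)
    (hx : x ∈ P) : x ≤ pivot n P (i - 1) ∨ pivot n P i ≤ x := by
  obtain ⟨j, hj, rfl⟩ := List.mem_iff_getElem.mp (mem_sort (· ≤ ·) |>.mpr hx)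
  rw [length_sort] at hj
  rw [← pivot_add_one j hj (n := n)]
  rcases le_or_gt (j + 1) (i - 1) with h | h
  · exact .inl (pivot_mono hP h (by omega))
  · exact .inr (pivot_mono hP (by omega) (by omega))

lemma pivot_image {n' j : ℕ} {f : ℕ → ℕ} (hf : StrictMonoOn f P) (hj : 1 ≤ j)
    (hj' : j ≤ #P) : pivot n' (P.image f) j = f (pivot n P j) := by
  obtain ⟨j, rfl⟩ := Nat.exists_eq_add_of_le' hj
  have hcard : #(P.image f) = #P := card_image_of_injOn hf.injOn
  rw [pivot_add_one j (by omega), pivot_add_one j (by omega)]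
  simp [sort_image_of_strictMonoOn hf]

end Pivots

section Shift

variable {b d : ℕ}

def shiftDown (b d x : ℕ) : ℕ := if b < x then x - d else x

def shiftUp (b d x : ℕ) : ℕ := if b < x then x + d else x

lemma shiftDown_of_le {x : ℕ} (hx : x ≤ b) : shiftDown b d x = x := if_neg (by omega)

lemma shiftUp_shiftDown {x : ℕ} (hx : x ≤ b ∨ b + d < x) :
    shiftUp b d (shiftDown b d x) = x := by
  unfold shiftUp shiftDown; split_ifs <;> omega

lemma strictMonoOn_shiftDown {S : Set ℕ} (hS : ∀ x ∈ S, x ≤ b ∨ b + d < x) :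
    StrictMonoOn (shiftDown b d) S := by
  intro x hx y hy hxy
  have := hS x hx; have := hS y hy
  unfold shiftDown; split_ifs <;> omega

lemma shiftDown_mem_Icc {n x : ℕ} (hx : x ∈ Icc 2 n) (hb : 1 ≤ b) (hbn : b + d ≤ n)
    (hsep : x ≤ b ∨ b + d < x) : shiftDown b d x ∈ Icc 2 (n - d) := by
  rw [mem_Icc] at hx ⊢; unfold shiftDown; split_ifs <;> omega

end Shift

section GapShrinking

variable {n i d : ℕ} {P : Finset ℕ}

/-- The pivots above `p_{i-1}` are exactly the `p_j` with `j ≥ i`, so this shortens the `i`-th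
gap by `d` and leaves the others unchanged. -/
def shrinkGap (n i d : ℕ) (P : Finset ℕ) : Finset ℕ :=
  P.image (shiftDown (pivot n P (i - 1)) d)

def widenGap (n i d : ℕ) (Q : Finset ℕ) : Finset ℕ := Q.image (shiftUp (pivot n Q (i - 1)) d)

lemma separated_of_lt_gap (hP : P ⊆ Icc 2 n) (hi : 1 ≤ i) (hi' : i ≤ #P + 1)
    (hd : d < gap n P i) :
    1 ≤ pivot n P (i - 1) ∧ pivot n P (i - 1) + d ≤ n ∧
      ∀ x ∈ P, x ≤ pivot n P (i - 1) ∨ pivot n P (i - 1) + d < x := by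
  have hgap : pivot n P (i - 1) + d < pivot n P i := by unfold gap at hd; unfold pivot; omega
  have h1 : 1 ≤ pivot n P (i - 1) :=
    pivot_zero (n := n) (P := P) ▸ pivot_mono hP (Nat.zero_le _) (by omega)
  have hn : pivot n P i ≤ n + 1 :=
    pivot_card_add_one (n := n) (P := P) ▸ pivot_mono hP hi' le_rfl
  refine ⟨h1, by omega, fun x hx => ?_⟩
  rcases le_pivot_or_pivot_le hP hi hi' hx with h | h
  · exact .inl h
  · exact .inr (by omega)

lemma shrinkGap_mem_pivotSets {m : ℕ} (hP : P ∈ pivotSets n m) (hi : 1 ≤ i) (hm : i ≤ m)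
    (hd : d < gap n P i) : shrinkGap n i d P ∈ pivotSets (n - d) m := by
  rw [pivotSets, mem_powersetCard] at hP ⊢
  obtain ⟨hsub, hcard⟩ := hP
  obtain ⟨h1, hn, hsep⟩ := separated_of_lt_gap hsub hi (by omega) hd
  refine ⟨fun y hy => ?_, ?_⟩
  · obtain ⟨x, hx, rfl⟩ := mem_image.mp hy
    exact shiftDown_mem_Icc (hsub hx) h1 hn (hsep x hx)
  · rw [shrinkGap, card_image_of_injOn (strictMonoOn_shiftDown hsep).injOn, hcard]

lemma widenGap_shrinkGap (hP : P ⊆ Icc 2 n) (hi : 1 ≤ i) (hi' : i ≤ #P + 1)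
    (hd : d < gap n P i) : widenGap (n - d) i d (shrinkGap n i d P) = P := by
  obtain ⟨-, -, hsep⟩ := separated_of_lt_gap hP hi hi' hd
  have hmono := strictMonoOn_shiftDown hsep
  have hpivot : pivot (n - d) (shrinkGap n i d P) (i - 1) = pivot n P (i - 1) := by
    rcases Nat.eq_zero_or_pos (i - 1) with h | h
    · rw [h, pivot_zero, pivot_zero]
    · rw [shrinkGap, pivot_image hmono h (by omega), shiftDown_of_le le_rfl]
  rw [widenGap, hpivot, shrinkGap, image_image]
  conv_rhs => rw [← image_id (s := P)]
  exact image_congr fun x hx => shiftUp_shiftDown (hsep x hx)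

lemma card_filter_lt_gap_le {m : ℕ} (hi : 1 ≤ i) (hm : i ≤ m) :
    #{P ∈ pivotSets n m | d < gap n P i} ≤ #(pivotSets (n - d) m) := by
  refine card_le_card_of_injOn (shrinkGap n i d) (fun P hP => ?_) (fun P hP Q hQ hPQ => ?_)
  · obtain ⟨hP, hd⟩ := mem_filter.mp hP
    exact shrinkGap_mem_pivotSets hP hi hm hd
  · obtain ⟨hP, hdP⟩ := mem_filter.mp hP
    obtain ⟨hQ, hdQ⟩ := mem_filter.mp hQ
    rw [pivotSets, mem_powersetCard] at hP hQ
    rw [← widenGap_shrinkGap hP.1 hi (by omega) hdP, ← widenGap_shrinkGap hQ.1 hi (by omega) hdQ,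
      hPQ]

lemma card_pivotSets (n m : ℕ) : #(pivotSets n m) = (n - 1).choose (m - 1) := by
  rw [pivotSets, card_powersetCard, Nat.card_Icc, Nat.add_sub_add_right n 1 1]

end GapShrinking

/-- The constants come from `(u-1)(tu-1) - (0.9t - 0.1)(u²-1) = (t+1)(u-1)(u-9)/10`. -/
lemma exponent_bound {u m s t : ℝ} (hu : 9 ≤ u) (ht : 1 ≤ t) (hm : u ≤ m) (hs : t * u ≤ s) :
    0.9 * t - 0.1 ≤ (m - 1) * (s - 1) / (u ^ 2 - 1) := by
  rw [le_div_iff₀ (by nlinarith)]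
  have hprod : (u - 1) * (t * u - 1) ≤ (m - 1) * (s - 1) :=
    mul_le_mul (by linarith) (by linarith) (by nlinarith) (by linarith)
  have hslack : 0 ≤ (t + 1) * ((u - 1) * (u - 9)) :=
    mul_nonneg (by linarith) (mul_nonneg (by linarith) (by linarith))
  linarith

theorem stmt_2 (n : ℕ) (hn : 100 ≤ n) (m : ℕ) (hm : m = ⌈Real.sqrt n⌉₊)
    (i : ℕ) (hi : i ∈ Finset.Icc 1 m) (t : ℝ) (ht : 1 ≤ t) :
    (((pivotSets n m).filter (fun P => t * Real.sqrt n ≤ (gap n P i : ℝ))).card : ℝ)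
        / (pivotSets n m).card
      ≤ Real.exp (-0.9 * t + 0.1) := by
  obtain ⟨hi1, him⟩ := mem_Icc.mp hi
  have hu : 10 ≤ √(n : ℝ) := Real.le_sqrt_of_sq_le (by norm_num; exact_mod_cast hn)
  have hmu : √(n : ℝ) ≤ m := hm ▸ Nat.le_ceil _
  set s := ⌈t * √(n : ℝ)⌉₊
  have hs : 1 ≤ s := Nat.one_le_iff_ne_zero.mpr (by positivity)
  have hfilter : (pivotSets n m).filter (fun P => t * √(n : ℝ) ≤ (gap n P i : ℝ))
      = (pivotSets n m).filter (fun P => s - 1 < gap n P i) :=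
    filter_congr fun P _ => Nat.ceil_le.symm.trans (by omega)
  have hcount := (card_filter_lt_gap_le (n := n) (d := s - 1) hi1 him).trans_eq
    (card_pivotSets _ _)
  rw [Nat.sub_right_comm] at hcount
  rw [hfilter, card_pivotSets]
  refine div_le_of_le_mul₀ (by positivity) (by positivity) ?_
  refine (Nat.cast_le.mpr hcount).trans ((Nat.choose_sub_le_mul_exp _ _ _).trans ?_)
  rw [mul_comm]
  gcongr
  rw [Nat.cast_sub (by omega), Nat.cast_sub (by omega), Nat.cast_sub (by omega),
    ← Real.sq_sqrt (Nat.cast_nonneg n)]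
  linarith [exponent_bound (by linarith) ht hmu (Nat.le_ceil (t * √(n : ℝ)))]
end

section
/- For any integer n ≥ 100, m = ⌈√n⌉, and real s ≥ 2: E_{(n₁,…,n_m)∼μ_n^m}[ Σ_{i=1}^m n_i · max(log_s n_i, 1) ] ≤ (1/2)·n·log_s n + 4e·n/log₂ s + 2e²·s². -/
open Finset

/-!
An element `x ∈ [1, n]` lies in the gap of index `1 + #{p ∈ P | p ≤ x}`, so `∑ nᵢ = n` and
`∑ nᵢ²` counts the pairs `(x, y)` lying in a common gap. For `x ≤ y` this happens only for the
pivot sets avoiding `(x, y]`, of which there are at most `C(n-1-(y-x), m-1)`; the hockey-stick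
identity then gives `E[∑ nᵢ²] ≤ 2n·C(n,m) / C(n-1,m-1) = 2n²/m ≤ 2n√n`.
With `a = max(√n, s)`, the inequality `log k ≤ log a + k/a` gives
`nᵢ · max(log_s nᵢ, 1) ≤ nᵢ log_s a + nᵢ² / (a log s)`; summing and averaging,
`E ≤ n log_s a + 2n / log s`, and `n log_s a ≤ ½ n log_s n + s²`, `2 ≤ 4e log 2`.
-/

theorem List.Pairwise.getElem_le_iff {α : Type*} [LinearOrder α] {l : List α}
    (hl : l.Pairwise (· ≤ ·)) {j : ℕ} (hj : j < l.length) (x : α) :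
    l[j] ≤ x ↔ j < (l.filter (· ≤ x)).length := by
  induction l generalizing j with
  | nil => simp at hj
  | cons a t ih =>
    obtain ⟨ha, ht⟩ := List.pairwise_cons.mp hl
    by_cases hax : a ≤ x
    · rw [List.filter_cons_of_pos (by simpa using hax)]
      cases j with
      | zero => simpa using hax
      | succ k => simpa using ih ht (by simpa using hj)
    · have hnil : t.filter (· ≤ x) = [] :=
        List.filter_eq_nil_iff.mpr fun b hb hbx => hax ((ha b hb).trans (by simpa using hbx))
      rw [List.filter_cons_of_neg (by simpa using hax), hnil]
      cases j with
      | zero => simpa using hax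
      | succ k => simpa using fun h => hax ((ha _ (List.getElem_mem _)).trans h)

theorem Finset.sum_card_filter_eq_sum_sq {α β : Type*} [DecidableEq β] {s : Finset α}
    {t : Finset β} {f : α → β} (h : ∀ x ∈ s, f x ∈ t) :
    ∑ x ∈ s, #{y ∈ s | f y = f x} = ∑ b ∈ t, #{x ∈ s | f x = b} ^ 2 := by
  rw [← Finset.sum_fiberwise_of_maps_to h]
  refine Finset.sum_congr rfl fun b _ => ?_
  rw [Finset.sum_congr rfl fun x hx => by rw [(Finset.mem_filter.mp hx).2], Finset.sum_const,
    smul_eq_mul, sq]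

theorem Finset.sum_Icc_one_eq_sum_range {M : Type*} [AddCommMonoid M] (f : ℕ → M) (k : ℕ) :
    ∑ i ∈ Icc 1 k, f i = ∑ j ∈ range k, f (j + 1) := by
  rw [← Finset.Ico_add_one_right_eq_Icc, Finset.sum_Ico_eq_sum_range, Nat.add_sub_cancel]
  simp only [add_comm]

theorem Nat.sum_range_choose_eq_choose_succ (n r : ℕ) :
    ∑ k ∈ range n, k.choose r = n.choose (r + 1) := by
  induction n with
  | zero => simp
  | succ n ih => rw [Finset.sum_range_succ, ih, Nat.choose_succ_succ', add_comm]

theorem Nat.sum_choose_le_choose_succ_of_injOn {α : Type*} [DecidableEq α] {A : Finset α}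
    {g : α → ℕ} {n : ℕ} (hg : Set.InjOn g A) (hlt : ∀ a ∈ A, g a < n) (r : ℕ) :
    ∑ a ∈ A, (g a).choose r ≤ n.choose (r + 1) := by
  rw [← Finset.sum_image (f := (·.choose r)) hg, ← Nat.sum_range_choose_eq_choose_succ]
  refine Finset.sum_le_sum_of_subset fun k hk => ?_
  obtain ⟨a, ha, rfl⟩ := Finset.mem_image.mp hk
  exact Finset.mem_range.mpr (hlt a ha)

theorem Real.max_logb_one_le {s a x : ℝ} (hs : 1 < s) (hsa : s ≤ a) (hx : 0 ≤ x) :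
    max (logb s x) 1 ≤ logb s a + x / (a * log s) := by
  have hlogs : 0 < log s := log_pos hs
  have ha : 0 < a := by linarith
  have hlogba : 1 ≤ logb s a := by
    rw [← logb_self_eq_one hs]
    exact logb_le_logb_of_le hs (by linarith) hsa
  have hrest : 0 ≤ x / (a * log s) := by positivity
  refine max_le ?_ (by linarith)
  rcases hx.eq_or_lt with rfl | hx
  · simp only [logb_zero]
    linarith
  · have hlog : log x ≤ log a + x / a := by
      have := log_le_sub_one_of_pos (div_pos hx ha)
      rw [log_div hx.ne' ha.ne'] at this
      linarith
    calc logb s x = log x / log s := rfl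
      _ ≤ (log a + x / a) / log s := div_le_div_of_nonneg_right hlog hlogs.le
      _ = logb s a + x / (a * log s) := by rw [add_div, div_div, logb]

theorem Real.sum_mul_max_logb_le {ι : Type*} (t : Finset ι) {g : ι → ℝ} (hg : ∀ i ∈ t, 0 ≤ g i)
    {s a : ℝ} (hs : 1 < s) (hsa : s ≤ a) :
    ∑ i ∈ t, g i * max (logb s (g i)) 1 ≤
      (∑ i ∈ t, g i) * logb s a + (∑ i ∈ t, g i ^ 2) / (a * log s) := by
  calc ∑ i ∈ t, g i * max (logb s (g i)) 1
      ≤ ∑ i ∈ t, (g i * logb s a + g i ^ 2 / (a * log s)) :=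
        Finset.sum_le_sum fun i hi => by
          have := mul_le_mul_of_nonneg_left (max_logb_one_le hs hsa (hg i hi)) (hg i hi)
          convert this using 1
          ring
    _ = _ := by rw [Finset.sum_add_distrib, Finset.sum_mul, Finset.sum_div]

theorem Real.mul_logb_max_sqrt_le {x s : ℝ} (hx : 1 ≤ x) (hs : 1 < s) :
    x * logb s (max √x s) ≤ 1 / 2 * x * logb s x + s ^ 2 := by
  have hlogx : 0 ≤ logb s x := logb_nonneg hs hx
  rcases le_total √x s with h | h
  · rw [max_eq_right h, logb_self_eq_one hs]
    have : x ≤ s ^ 2 := (sqrt_le_left (by linarith)).mp h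
    nlinarith
  · have hhalf : logb s √x = 1 / 2 * logb s x := by
      rw [logb, logb, log_sqrt (by linarith)]
      ring
    rw [max_eq_left h, hhalf]
    nlinarith

theorem Real.two_mul_div_log_le {x s : ℝ} (hx : 0 ≤ x) (hs : 1 < s) :
    2 * x / log s ≤ 4 * exp 1 * x / logb 2 s := by
  have hconst : 2 ≤ 4 * exp 1 * log 2 := by nlinarith [log_two_gt_d9, exp_one_gt_d9]
  rw [logb, div_div_eq_mul_div]
  refine div_le_div_of_nonneg_right ?_ (log_pos hs).le
  nlinarith [mul_le_mul_of_nonneg_right hconst hx]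

namespace PivotSample

/-- The element `x ∈ [1, n]` lies in the gap of index `bucket P x + 1`. -/
def bucket (P : Finset ℕ) (x : ℕ) : ℕ := #{p ∈ P | p ≤ x}

variable {n : ℕ} {P : Finset ℕ}

theorem length_pivotList : (pivotList n P).length = #P + 2 := by
  simp [pivotList]

theorem mem_pivotList {a : ℕ} : a ∈ pivotList n P ↔ a = 1 ∨ a ∈ P ∨ a = n + 1 := by
  simp [pivotList, Finset.mem_sort]

theorem pairwise_pivotList (hP : P ⊆ Icc 1 n) : (pivotList n P).Pairwise (· ≤ ·) := by
  have hP' : ∀ p ∈ P, 1 ≤ p ∧ p ≤ n := fun p hp => Finset.mem_Icc.mp (hP hp)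
  simp only [pivotList, List.cons_append, List.pairwise_cons, List.pairwise_append,
    Finset.pairwise_sort, List.mem_append, List.mem_singleton, Finset.mem_sort]
  grind

theorem length_filter_pivotList {x : ℕ} (hx : 1 ≤ x) (hxn : x ≤ n) :
    ((pivotList n P).filter (· ≤ x)).length = bucket P x + 1 := by
  have hsort : ((P.sort (· ≤ ·)).filter (· ≤ x)).length = bucket P x := by
    rw [bucket, Finset.card_def, Finset.filter_val, ← Finset.sort_eq P (· ≤ ·),
      Multiset.filter_coe, Multiset.coe_card]
  simp [pivotList, List.filter_append, hx, hsort, hxn]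

theorem getD_pivotList_le_iff {x j : ℕ} (hP : P ⊆ Icc 1 n) (hj : j < #P + 2) (hx : 1 ≤ x)
    (hxn : x ≤ n) : (pivotList n P).getD j 0 ≤ x ↔ j ≤ bucket P x := by
  rw [← length_pivotList (n := n)] at hj
  rw [List.getD_eq_getElem _ _ hj, (pairwise_pivotList hP).getElem_le_iff hj,
    length_filter_pivotList hx hxn, Nat.lt_succ_iff]

theorem getD_pivotList_mem_Icc {j : ℕ} (hP : P ⊆ Icc 1 n) (hj : j < #P + 2) :
    (pivotList n P).getD j 0 ∈ Icc 1 (n + 1) := by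
  rw [← length_pivotList (n := n)] at hj
  rw [List.getD_eq_getElem _ _ hj]
  rcases mem_pivotList.mp (List.getElem_mem hj) with h | h | h
  · simp [h]
  · have := Finset.mem_Icc.mp (hP h)
    exact Finset.mem_Icc.mpr ⟨this.1, by omega⟩
  · simp [h]

theorem filter_bucket_eq_Ico {j : ℕ} (hP : P ⊆ Icc 1 n) (hj : j ≤ #P) :
    {x ∈ Icc 1 n | bucket P x = j} =
      Ico ((pivotList n P).getD j 0) ((pivotList n P).getD (j + 1) 0) := by
  have hlo := Finset.mem_Icc.mp (getD_pivotList_mem_Icc (n := n) hP (j := j) (by omega))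
  have hhi := Finset.mem_Icc.mp (getD_pivotList_mem_Icc (n := n) hP (j := j + 1) (by omega))
  ext x
  simp only [Finset.mem_filter, Finset.mem_Icc, Finset.mem_Ico]
  constructor
  · rintro ⟨⟨hx, hxn⟩, rfl⟩
    rw [getD_pivotList_le_iff hP (by omega) hx hxn, not_le.symm,
      getD_pivotList_le_iff hP (by omega) hx hxn]
    omega
  · rintro ⟨hjx, hxj⟩
    have hx : 1 ≤ x := by omega
    have hxn : x ≤ n := by omega
    rw [getD_pivotList_le_iff hP (by omega) hx hxn] at hjx
    rw [← not_le, getD_pivotList_le_iff hP (by omega) hx hxn] at hxj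
    exact ⟨⟨hx, hxn⟩, by omega⟩

theorem gap_succ_eq_card {j : ℕ} (hP : P ⊆ Icc 1 n) (hj : j ≤ #P) :
    gap n P (j + 1) = #{x ∈ Icc 1 n | bucket P x = j} := by
  rw [filter_bucket_eq_Ico hP hj, Nat.card_Ico, gap, Nat.add_sub_cancel]

theorem bucket_mem_range (P : Finset ℕ) (x : ℕ) : bucket P x ∈ range (#P + 1) :=
  Finset.mem_range.mpr (Nat.lt_succ_of_le (Finset.card_filter_le _ _))

theorem sum_gap (hP : P ⊆ Icc 1 n) : ∑ i ∈ Icc 1 (#P + 1), gap n P i = n := by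
  rw [Finset.sum_Icc_one_eq_sum_range, Finset.sum_congr rfl fun j hj =>
      gap_succ_eq_card hP (Nat.lt_succ_iff.mp (Finset.mem_range.mp hj)),
    ← Finset.card_eq_sum_card_fiberwise fun x _ => bucket_mem_range P x, Nat.card_Icc,
    Nat.add_sub_cancel]

theorem sum_gap_sq (hP : P ⊆ Icc 1 n) :
    ∑ i ∈ Icc 1 (#P + 1), gap n P i ^ 2 =
      ∑ x ∈ Icc 1 n, #{y ∈ Icc 1 n | bucket P y = bucket P x} := by
  rw [Finset.sum_Icc_one_eq_sum_range, Finset.sum_congr rfl fun j hj =>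
      congrArg (· ^ 2) (gap_succ_eq_card hP (Nat.lt_succ_iff.mp (Finset.mem_range.mp hj))),
    Finset.sum_card_filter_eq_sum_sq fun x _ => bucket_mem_range P x]

theorem notMem_Ioc_of_bucket_eq {x y p : ℕ} (hxy : x ≤ y) (h : bucket P x = bucket P y)
    (hp : p ∈ P) : p ∉ Ioc x y := by
  have hsub : {p ∈ P | p ≤ x} ⊆ {p ∈ P | p ≤ y} :=
    Finset.monotone_filter_right P fun _ _ hpx => hpx.trans hxy
  have heq := Finset.eq_of_subset_of_card_le hsub h.ge
  intro hpxy
  have hpy : p ∈ {p ∈ P | p ≤ y} := Finset.mem_filter.mpr ⟨hp, (Finset.mem_Ioc.mp hpxy).2⟩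
  rw [← heq, Finset.mem_filter] at hpy
  exact absurd hpy.2 (Finset.mem_Ioc.mp hpxy).1.not_ge

theorem card_pivotSets (n m : ℕ) : #(pivotSets n m) = (n - 1).choose (m - 1) := by
  rw [pivotSets, Finset.card_powersetCard, Nat.card_Icc]
  rfl

theorem card_filter_bucket_eq_le {m x y : ℕ} (hx : 1 ≤ x) (hxy : x ≤ y) (hyn : y ≤ n) :
    #{P ∈ pivotSets n m | bucket P x = bucket P y} ≤ (n - 1 - (y - x)).choose (m - 1) := by
  have hIoc : Ioc x y ⊆ Icc 2 n := fun a ha => by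
    simp only [Finset.mem_Ioc, Finset.mem_Icc] at ha ⊢; omega
  calc #{P ∈ pivotSets n m | bucket P x = bucket P y}
      ≤ #((Icc 2 n \ Ioc x y).powersetCard (m - 1)) := by
        refine Finset.card_le_card fun P hP => ?_
        obtain ⟨hP, hxy'⟩ := Finset.mem_filter.mp hP
        obtain ⟨hPsub, hPcard⟩ := Finset.mem_powersetCard.mp hP
        exact Finset.mem_powersetCard.mpr ⟨fun p hp => Finset.mem_sdiff.mpr
          ⟨hPsub hp, notMem_Ioc_of_bucket_eq hxy hxy' hp⟩, hPcard⟩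
    _ = (n - 1 - (y - x)).choose (m - 1) := by
        rw [Finset.card_powersetCard, Finset.card_sdiff_of_subset hIoc, Nat.card_Icc,
          Nat.card_Ioc]
        rfl

theorem subset_Icc_of_mem_pivotSets {m : ℕ} (hP : P ∈ pivotSets n m) : P ⊆ Icc 1 n :=
  (Finset.mem_powersetCard.mp hP).1.trans (Finset.Icc_subset_Icc_left one_le_two)

theorem card_add_one_of_mem_pivotSets {m : ℕ} (hm : 1 ≤ m) (hP : P ∈ pivotSets n m) :
    #P + 1 = m := by
  rw [(Finset.mem_powersetCard.mp hP).2, Nat.sub_add_cancel hm]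

theorem sum_card_filter_bucket_eq_le {m x : ℕ} (hm : 1 ≤ m) (hx : x ∈ Icc 1 n) :
    ∑ y ∈ Icc 1 n, #{P ∈ pivotSets n m | bucket P y = bucket P x} ≤ 2 * n.choose m := by
  obtain ⟨hx1, hxn⟩ := Finset.mem_Icc.mp hx
  rw [← Finset.sum_filter_add_sum_filter_not _ (· ≤ x), two_mul, ← Nat.sub_add_cancel hm]
  gcongr
  · calc _ ≤ ∑ y ∈ Icc 1 n with y ≤ x, (n - 1 - (x - y)).choose (m - 1) :=
          Finset.sum_le_sum fun y hy => by
            obtain ⟨hy, hyx⟩ := Finset.mem_filter.mp hy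
            exact card_filter_bucket_eq_le (Finset.mem_Icc.mp hy).1 hyx hxn
      _ ≤ _ := Nat.sum_choose_le_choose_succ_of_injOn
          (fun a ha b hb hab => by
            simp only [Finset.mem_coe, Finset.mem_filter, Finset.mem_Icc] at ha hb hab; omega)
          (fun y hy => by simp only [Finset.mem_filter, Finset.mem_Icc] at hy; omega) _
  · calc _ ≤ ∑ y ∈ Icc 1 n with ¬y ≤ x, (n - 1 - (y - x)).choose (m - 1) :=
          Finset.sum_le_sum fun y hy => by
            obtain ⟨hy, hxy⟩ := Finset.mem_filter.mp hy
            simp_rw [eq_comm (a := bucket _ y)]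
            exact card_filter_bucket_eq_le hx1 (not_le.mp hxy).le (Finset.mem_Icc.mp hy).2
      _ ≤ _ := Nat.sum_choose_le_choose_succ_of_injOn
          (fun a ha b hb hab => by
            simp only [Finset.mem_coe, Finset.mem_filter, Finset.mem_Icc] at ha hb hab; omega)
          (fun y hy => by simp only [Finset.mem_filter, Finset.mem_Icc] at hy; omega) _

theorem sum_sum_gap_sq_le {m : ℕ} (hm : 1 ≤ m) :
    ∑ P ∈ pivotSets n m, ∑ i ∈ Icc 1 m, gap n P i ^ 2 ≤ n * (2 * n.choose m) := by
  calc ∑ P ∈ pivotSets n m, ∑ i ∈ Icc 1 m, gap n P i ^ 2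
      = ∑ P ∈ pivotSets n m, ∑ x ∈ Icc 1 n, ∑ y ∈ Icc 1 n,
          if bucket P y = bucket P x then 1 else 0 := by
        refine Finset.sum_congr rfl fun P hP => ?_
        rw [← card_add_one_of_mem_pivotSets hm hP, sum_gap_sq (subset_Icc_of_mem_pivotSets hP)]
        simp only [Finset.card_filter]
    _ = ∑ x ∈ Icc 1 n, ∑ y ∈ Icc 1 n, #{P ∈ pivotSets n m | bucket P y = bucket P x} := by
        simp only [Finset.card_filter]
        rw [Finset.sum_comm]
        exact Finset.sum_congr rfl fun _ _ => Finset.sum_comm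
    _ ≤ ∑ x ∈ Icc 1 n, 2 * n.choose m :=
        Finset.sum_le_sum fun x hx => sum_card_filter_bucket_eq_le hm hx
    _ = n * (2 * n.choose m) := by rw [Finset.sum_const, Nat.card_Icc, smul_eq_mul,
        Nat.add_sub_cancel]

theorem choose_mul_eq_mul_card_pivotSets {m : ℕ} (hm : 1 ≤ m) :
    n.choose m * m = n * #(pivotSets n m) := by
  rw [card_pivotSets]
  cases n with
  | zero => simp [Nat.choose_eq_zero_of_lt hm]
  | succ k =>
    have := Nat.add_one_mul_choose_eq k (m - 1)
    rwa [Nat.sub_add_cancel hm, eq_comm] at this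

theorem mul_sum_sum_gap_sq_le {m : ℕ} (hm : 1 ≤ m) :
    m * ∑ P ∈ pivotSets n m, ∑ i ∈ Icc 1 m, gap n P i ^ 2 ≤ 2 * n ^ 2 * #(pivotSets n m) :=
  calc m * ∑ P ∈ pivotSets n m, ∑ i ∈ Icc 1 m, gap n P i ^ 2
      ≤ m * (n * (2 * n.choose m)) := Nat.mul_le_mul_left m (sum_sum_gap_sq_le hm)
    _ = 2 * n * (n.choose m * m) := by ring
    _ = 2 * n ^ 2 * #(pivotSets n m) := by rw [choose_mul_eq_mul_card_pivotSets hm]; ring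

theorem sum_sum_gap_mul_max_logb_le {m : ℕ} {s : ℝ} (hn : 0 < n) (hm : √n ≤ m) (hs : 1 < s) :
    ∑ P ∈ pivotSets n m, ∑ i ∈ Icc 1 m, (gap n P i : ℝ) * max (Real.logb s (gap n P i)) 1 ≤
      #(pivotSets n m) * (n * Real.logb s (max √n s) + 2 * n / Real.log s) := by
  set a := max √n s
  have hsa : s ≤ a := le_max_right _ _
  have hna : √n ≤ a := le_max_left _ _
  have hsqrt : 0 < √(n : ℝ) := Real.sqrt_pos.mpr (by exact_mod_cast hn)
  have hm1 : 1 ≤ m := Nat.cast_pos.mp (hsqrt.trans_le hm)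
  have hlogs : 0 < Real.log s := Real.log_pos hs
  have ha : 0 < a := hsqrt.trans_le hna
  set D : ℝ := (#(pivotSets n m) : ℝ)
  set Q : ℝ := ∑ P ∈ pivotSets n m, ∑ i ∈ Icc 1 m, (gap n P i : ℝ) ^ 2
  have hQ : m * Q ≤ 2 * n ^ 2 * D := by
    simp only [Q, D]
    exact_mod_cast mul_sum_sum_gap_sq_le (n := n) hm1
  have hnma : (n : ℝ) ≤ m * a := by
    rw [← Real.mul_self_sqrt n.cast_nonneg]
    exact mul_le_mul hm hna hsqrt.le (by positivity)
  have hQa : Q ≤ 2 * n * a * D := by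
    refine le_of_mul_le_mul_left ?_ (Nat.cast_pos.mpr hn)
    calc n * Q ≤ m * a * Q := by gcongr
      _ = a * (m * Q) := by ring
      _ ≤ a * (2 * n ^ 2 * D) := by gcongr
      _ = n * (2 * n * a * D) := by ring
  have hper : ∀ P ∈ pivotSets n m,
      ∑ i ∈ Icc 1 m, (gap n P i : ℝ) * max (Real.logb s (gap n P i)) 1 ≤
        n * Real.logb s a + (∑ i ∈ Icc 1 m, (gap n P i : ℝ) ^ 2) / (a * Real.log s) := by
    intro P hP
    have hsum : ∑ i ∈ Icc 1 m, (gap n P i : ℝ) = n := by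
      rw [← Nat.cast_sum, ← card_add_one_of_mem_pivotSets hm1 hP,
        sum_gap (subset_Icc_of_mem_pivotSets hP)]
    simpa only [hsum] using Real.sum_mul_max_logb_le (Icc 1 m) (g := fun i => (gap n P i : ℝ))
      (fun _ _ => Nat.cast_nonneg _) hs hsa
  calc _ ≤ ∑ P ∈ pivotSets n m,
        (n * Real.logb s a + (∑ i ∈ Icc 1 m, (gap n P i : ℝ) ^ 2) / (a * Real.log s)) :=
        Finset.sum_le_sum hper
    _ = D * (n * Real.logb s a) + Q / (a * Real.log s) := by
        rw [Finset.sum_add_distrib, Finset.sum_const, nsmul_eq_mul, ← Finset.sum_div]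
    _ ≤ D * (n * Real.logb s a) + 2 * n * a * D / (a * Real.log s) := by gcongr
    _ = D * (n * Real.logb s a + 2 * n / Real.log s) := by field_simp

end PivotSample

theorem stmt_5 (n : ℕ) (hn : 100 ≤ n) (m : ℕ) (hm : m = ⌈Real.sqrt n⌉₊)
    (s : ℝ) (hs : 2 ≤ s) :
    (∑ P ∈ pivotSets n m, ∑ i ∈ Finset.Icc 1 m,
        (gap n P i : ℝ) * max (Real.logb s (gap n P i)) 1) / (pivotSets n m).card
      ≤ (1 / 2) * n * Real.logb s n + 4 * Real.exp 1 * n / Real.logb 2 s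
        + 2 * (Real.exp 1) ^ 2 * s ^ 2 := by
  have hs1 : 1 < s := by linarith
  have hn1 : (1 : ℝ) ≤ n := by exact_mod_cast (by omega : 1 ≤ n)
  have hs2 : s ^ 2 ≤ 2 * Real.exp 1 ^ 2 * s ^ 2 := by
    nlinarith [one_le_pow₀ (n := 2) (Real.one_le_exp zero_le_one), sq_nonneg s]
  have hlogn : 0 ≤ Real.logb s n := Real.logb_nonneg hs1 hn1
  have hlog2 : 0 ≤ Real.logb 2 s := Real.logb_nonneg one_lt_two hs1.le
  have hlog_term := Real.mul_logb_max_sqrt_le hn1 hs1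
  have hlin_term := Real.two_mul_div_log_le (Nat.cast_nonneg n) hs1
  refine div_le_of_le_mul₀ (Nat.cast_nonneg _) (by positivity) ?_
  refine (PivotSample.sum_sum_gap_mul_max_logb_le (by omega) (hm ▸ Nat.le_ceil _) hs1).trans ?_
  rw [mul_comm]
  exact mul_le_mul_of_nonneg_right (by linarith) (Nat.cast_nonneg _)
end

section
/- If a random variable X on the positive integers satisfies Pr[X ≥ t√n] ≤ e^{−0.9t+0.1} for all t ≥ 1, then E[X · log₂⌈X/√n⌉] ≤ 3e·√n. -/
/-!
With `s = √n` and `c = ⌈k / s⌉`, we have `k ≤ c s` and `log₂ c ≤ c - 1`, so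
`k log₂ c ≤ c (c - 1) s = ∑_{j < c} 2 j s`, and `j < c` exactly when `j s < k`. Hence
`k log₂ ⌈k / s⌉ ≤ ∑_j 2 j s · 𝟙[j s ≤ k]`, whose expectation is `∑_j 2 j s · Pr[X ≥ j s]`.
The tail bound makes this at most `2 s e^{0.1} ∑_j j x^j ≤ 2 s e^{0.1} x / (1 - x)^2`
with `x = e^{-0.9} ≤ 0.45`, and `x / (1 - x)^2 ≤ 3 / 2`.
-/

open MeasureTheory Finset

lemma Real.logb_two_natCast_le_sub_one {c : ℕ} (hc : 1 ≤ c) : Real.logb 2 c ≤ c - 1 := by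
  have hpow : c ≤ 2 ^ (c - 1) := by
    have := Nat.lt_two_pow_self (n := c - 1)
    omega
  calc Real.logb 2 c ≤ Real.logb 2 (2 ^ (c - 1)) :=
        Real.logb_le_logb_of_le one_lt_two (by exact_mod_cast hc) (by exact_mod_cast hpow)
    _ = c - 1 := by
        rw [Real.logb_pow, Real.logb_self_eq_one one_lt_two, mul_one, Nat.cast_sub hc, Nat.cast_one]

lemma sum_range_two_mul_natCast (c : ℕ) : ∑ j ∈ range c, (2 * j : ℝ) = c * (c - 1) := by
  induction c with
  | zero => simp
  | succ c ih => rw [sum_range_succ, ih]; push_cast; ring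

lemma natCast_mul_logb_ceil_le_sum {s : ℝ} (hs : 1 ≤ s) {k N : ℕ} (hkN : k ≤ N) :
    k * Real.logb 2 (⌈(k : ℝ) / s⌉ : ℤ) ≤
      ∑ j ∈ range N, if j * s ≤ k then 2 * j * s else 0 := by
  have hterm_nonneg : ∀ j ∈ range N, 0 ≤ if (j : ℝ) * s ≤ k then 2 * j * s else (0 : ℝ) :=
    fun j _ => by split_ifs <;> positivity
  rcases Nat.eq_zero_or_pos k with rfl | hk
  · simpa using sum_nonneg hterm_nonneg
  have hs0 : 0 < s := one_pos.trans_le hs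
  set c := ⌈(k : ℝ) / s⌉₊
  have hceil : ((⌈(k : ℝ) / s⌉ : ℤ) : ℝ) = c := by
    exact_mod_cast (Int.natCast_ceil_eq_ceil (by positivity)).symm
  have hc1 : 1 ≤ c := Nat.one_le_iff_ne_zero.2 (by positivity)
  have hk_le : (k : ℝ) ≤ c * s := (div_le_iff₀ hs0).1 (Nat.le_ceil _)
  have hcN : c ≤ N := (Nat.ceil_le.2 (div_le_self k.cast_nonneg hs)).trans hkN
  have hterm : ∀ j ∈ range c, (if (j : ℝ) * s ≤ k then 2 * j * s else 0) = 2 * j * s := by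
    intro j hj
    exact if_pos ((lt_div_iff₀ hs0).1 (Nat.lt_ceil.1 (mem_range.1 hj))).le
  calc k * Real.logb 2 (⌈(k : ℝ) / s⌉ : ℤ) ≤ k * (c - 1) := by
        rw [hceil]
        exact mul_le_mul_of_nonneg_left (Real.logb_two_natCast_le_sub_one hc1) k.cast_nonneg
    _ ≤ c * s * (c - 1) :=
        mul_le_mul_of_nonneg_right hk_le (sub_nonneg.2 (Nat.one_le_cast.2 hc1))
    _ = ∑ j ∈ range c, 2 * j * s := by
        rw [← sum_mul, sum_range_two_mul_natCast]; ring
    _ = ∑ j ∈ range c, if j * s ≤ k then 2 * j * s else 0 := (sum_congr rfl hterm).symm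
    _ ≤ ∑ j ∈ range N, if j * s ≤ k then 2 * j * s else 0 :=
        sum_le_sum_of_subset_of_nonneg (range_subset_range.2 hcN) fun j hj _ => hterm_nonneg j hj

lemma sum_range_natCast_mul_pow_le {x : ℝ} (hx0 : 0 ≤ x) (hx1 : x < 1) (N : ℕ) :
    ∑ j ∈ range N, (j : ℝ) * x ^ j ≤ x / (1 - x) ^ 2 :=
  sum_le_hasSum _ (fun j _ => by positivity)
    (hasSum_coe_mul_geometric_of_norm_lt_one (by rwa [Real.norm_of_nonneg hx0]))

lemma Real.exp_neg_nine_tenths_le : Real.exp (-0.9) ≤ 0.45 := by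
  have h := Real.quadratic_le_exp_of_nonneg (x := 0.9) (by norm_num)
  rw [Real.exp_neg, inv_le_comm₀ (Real.exp_pos _) (by norm_num)]
  linarith

lemma sum_range_two_mul_mul_exp_le (N : ℕ) :
    ∑ j ∈ range N, 2 * j * Real.exp (-0.9 * j + 0.1) ≤ 3 * Real.exp 1 := by
  set x := Real.exp (-0.9)
  have hx0 : 0 < x := Real.exp_pos _
  have hx : x ≤ 0.45 := Real.exp_neg_nine_tenths_le
  have hgeom : x / (1 - x) ^ 2 ≤ 1.5 := by
    rw [div_le_iff₀ (by nlinarith)]; nlinarith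
  have hexp : Real.exp 0.1 ≤ Real.exp 1 := Real.exp_le_exp.2 (by norm_num)
  calc ∑ j ∈ range N, 2 * j * Real.exp (-0.9 * j + 0.1)
      = 2 * Real.exp 0.1 * ∑ j ∈ range N, (j : ℝ) * x ^ j := by
        rw [mul_sum]
        refine sum_congr rfl fun j _ => ?_
        rw [Real.exp_add, mul_comm (-0.9 : ℝ), Real.exp_nat_mul]; ring
    _ ≤ 2 * Real.exp 1 * 1.5 := by
        gcongr
        exact (sum_range_natCast_mul_pow_le hx0.le (by linarith) N).trans hgeom
    _ = 3 * Real.exp 1 := by ring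

lemma natCast_mul_logb_two_intCast_nonneg (k : ℕ) (m : ℤ) : 0 ≤ (k : ℝ) * Real.logb 2 m :=
  mul_nonneg k.cast_nonneg (div_nonneg (Real.log_intCast_nonneg m) (Real.log_nonneg one_le_two))

lemma integral_le_sum_measureReal_mul_of_ae_le {α ι : Type*} [MeasurableSpace α]
    {μ : Measure α} [IsFiniteMeasure μ] {f : α → ℝ} {s : Finset ι} {A : ι → Set α}
    (hA : ∀ i ∈ s, MeasurableSet (A i)) {c : ι → ℝ} (hf : 0 ≤ᵐ[μ] f)
    (hle : ∀ᵐ x ∂μ, f x ≤ ∑ i ∈ s, (A i).indicator (fun _ => c i) x) :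
    ∫ x, f x ∂μ ≤ ∑ i ∈ s, μ.real (A i) * c i := by
  have hint : ∀ i ∈ s, Integrable ((A i).indicator fun _ => c i) μ :=
    fun i hi => (integrable_const _).indicator (hA i hi)
  calc ∫ x, f x ∂μ ≤ ∫ x, ∑ i ∈ s, (A i).indicator (fun _ => c i) x ∂μ :=
        integral_mono_of_nonneg hf (integrable_finsetSum _ hint) hle
    _ = ∑ i ∈ s, μ.real (A i) * c i := by
        rw [integral_finsetSum _ hint]
        exact sum_congr rfl fun i hi => integral_indicator_const _ (hA i hi)

theorem stmt_6 (n : ℕ) (hn : 1 ≤ n)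
    (μ : Measure ℕ) [IsProbabilityMeasure μ]
    (hsupp : μ (Set.Icc 1 (n - 1))ᶜ = 0)
    (htail : ∀ t : ℝ, 1 ≤ t →
      (μ {k | t * Real.sqrt n ≤ (k : ℝ)}).toReal ≤ Real.exp (-0.9 * t + 0.1)) :
    ∫ k, (k : ℝ) * Real.logb 2 ((⌈(k : ℝ) / Real.sqrt n⌉ : ℤ) : ℝ) ∂μ
      ≤ 3 * Real.exp 1 * Real.sqrt n := by
  set s := Real.sqrt n
  have hs : 1 ≤ s := Real.one_le_sqrt.2 (by exact_mod_cast hn)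
  let tail (j : ℕ) : Set ℕ := {k | j * s ≤ (k : ℝ)}
  have hpoint : ∀ᵐ (k : ℕ) ∂μ, (k : ℝ) * Real.logb 2 (⌈(k : ℝ) / s⌉ : ℤ) ≤
      ∑ j ∈ range n, (tail j).indicator (fun _ => 2 * j * s) k := by
    filter_upwards [mem_ae_iff.2 hsupp] with k hk
    simpa [tail, Set.indicator_apply] using
      natCast_mul_logb_ceil_le_sum hs (hk.2.trans (n.sub_le 1))
  have htail_mul : ∀ j ∈ range n,
      μ.real (tail j) * (2 * j * s) ≤ s * (2 * j * Real.exp (-0.9 * j + 0.1)) := by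
    intro j _
    rcases Nat.eq_zero_or_pos j with rfl | hj
    · simp
    calc μ.real (tail j) * (2 * j * s) ≤ Real.exp (-0.9 * j + 0.1) * (2 * j * s) :=
          mul_le_mul_of_nonneg_right (htail j (by exact_mod_cast hj)) (by positivity)
      _ = s * (2 * j * Real.exp (-0.9 * j + 0.1)) := by ring
  calc ∫ k, (k : ℝ) * Real.logb 2 (⌈(k : ℝ) / s⌉ : ℤ) ∂μ
      ≤ ∑ j ∈ range n, μ.real (tail j) * (2 * j * s) :=
        integral_le_sum_measureReal_mul_of_ae_le (fun _ _ => .of_discrete)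
          (ae_of_all _ fun k => natCast_mul_logb_two_intCast_nonneg k _) hpoint
    _ ≤ s * ∑ j ∈ range n, 2 * j * Real.exp (-0.9 * j + 0.1) := by
        rw [mul_sum]; exact sum_le_sum htail_mul
    _ ≤ 3 * Real.exp 1 * s := by
        rw [mul_comm _ s]
        exact mul_le_mul_of_nonneg_left (sum_range_two_mul_mul_exp_le n) (by positivity)
end

section
/- For integers n ≥ 2 and m = ⌈√n⌉, when sampling m−1 elements independently and uniformly at random from a set of n−1 elements, the probability that all m−1 samples are distinct is at least e^{−2}. -/
lemma aux_exp_bound (x : ℝ) (h0 : 0 ≤ x) (h2 : x ≤ 1/2) :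
    Real.exp (-(2*x)) ≤ 1 - x := by
  have h1 : 1 + 2*x ≤ Real.exp (2*x) := by
    have := Real.add_one_le_exp (2*x); linarith
  have heq : Real.exp (-(2*x)) = 1 / Real.exp (2*x) := by
    rw [Real.exp_neg]; ring
  rw [heq, div_le_iff₀ (Real.exp_pos _)]
  nlinarith [Real.exp_pos (2*x), mul_nonneg h0 h0]

theorem stmt_9 (n : ℕ) (hn : 2 ≤ n) (m : ℕ) (hm : m = ⌈Real.sqrt n⌉₊) :
    Real.exp (-2) ≤ ∏ i ∈ Finset.Icc 1 (m - 1), (1 - ((i : ℝ) - 1) / ((n : ℝ) - 1)) := by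
  have hn2 : (2:ℝ) ≤ (n:ℝ) := by exact_mod_cast hn
  have hD : (1:ℝ) ≤ (n:ℝ) - 1 := by linarith
  have hDpos : (0:ℝ) < (n:ℝ) - 1 := by linarith
  -- m ≥ 2
  have hm2 : 2 ≤ m := by
    rw [hm]
    have : (1:ℝ) < Real.sqrt n := by
      rw [show (1:ℝ) = Real.sqrt 1 by simp]
      exact Real.sqrt_lt_sqrt (by norm_num) (by linarith)
    have := Nat.lt_ceil.mpr (by exact_mod_cast this : ((1:ℕ):ℝ) < Real.sqrt n)
    omega
  -- (m-1)^2 < n  in ℕ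
  have hsq : (m - 1)^2 < n := by
    have h1 : (m - 1 : ℕ) < ⌈Real.sqrt n⌉₊ := by omega
    have h2 : ((m - 1 : ℕ) : ℝ) < Real.sqrt n := Nat.lt_ceil.mp h1
    have h3 : ((m - 1 : ℕ) : ℝ)^2 < (n:ℝ) := by
      have := Real.sq_sqrt (by positivity : (0:ℝ) ≤ (n:ℝ))
      nlinarith [Nat.cast_nonneg (α := ℝ) (m-1)]
    exact_mod_cast h3
  -- key real bound
  have hcast : ((m - 1 : ℕ) : ℝ) = (m:ℝ) - 1 := by
    have : (1:ℕ) ≤ m := by omega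
    push_cast [Nat.cast_sub this]; ring
  have hkey : ((m:ℝ) - 2) * ((m:ℝ) - 1) ≤ (n:ℝ) - 1 := by
    have h4 : ((m - 1 : ℕ) : ℝ)^2 + 1 ≤ (n:ℝ) := by exact_mod_cast hsq
    rw [hcast] at h4
    nlinarith [hcast, (by exact_mod_cast hm2 : (2:ℝ) ≤ (m:ℝ))]
  have hhalf : 2 * ((m:ℝ) - 2) ≤ (n:ℝ) - 1 := by
    have hm2' : (2:ℝ) ≤ (m:ℝ) := by exact_mod_cast hm2
    rcases le_or_gt (m:ℝ) 2 with h | h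
    · linarith
    · have hm3 : (3:ℕ) ≤ m := by exact_mod_cast (by exact_mod_cast h : (2:ℕ) < m)
      have : (3:ℝ) ≤ (m:ℝ) := by exact_mod_cast hm3
      nlinarith
  -- each term x_i ∈ [0, 1/2]
  set D := (n:ℝ) - 1 with hDdef
  have hx : ∀ i ∈ Finset.Icc 1 (m-1), 0 ≤ ((i:ℝ) - 1) / D ∧ ((i:ℝ) - 1) / D ≤ 1/2 := by
    intro i hi
    simp only [Finset.mem_Icc] at hi
    have h1 : (1:ℝ) ≤ (i:ℝ) := by exact_mod_cast hi.1
    have h2 : (i:ℝ) ≤ (m:ℝ) - 1 := by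
      have : ((i:ℕ):ℝ) ≤ ((m-1:ℕ):ℝ) := by exact_mod_cast hi.2
      rwa [hcast] at this
    constructor
    · apply div_nonneg _ (le_of_lt hDpos); linarith
    · rw [div_le_iff₀ hDpos]; linarith
  -- product of exponentials lower bound
  calc Real.exp (-2)
      ≤ Real.exp (∑ i ∈ Finset.Icc 1 (m-1), -(2 * (((i:ℝ) - 1) / D))) := by
        apply Real.exp_le_exp.mpr
        have hsum : ∑ i ∈ Finset.Icc 1 (m-1), 2 * (((i:ℝ) - 1) / D) ≤ 2 := by
          have hb : ∀ i ∈ Finset.Icc 1 (m-1), 2 * (((i:ℝ) - 1) / D) ≤ 2 * (((m:ℝ) - 2) / D) := by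
            intro i hi
            simp only [Finset.mem_Icc] at hi
            have h2 : (i:ℝ) ≤ (m:ℝ) - 1 := by
              have : ((i:ℕ):ℝ) ≤ ((m-1:ℕ):ℝ) := by exact_mod_cast hi.2
              rwa [hcast] at this
            have : ((i:ℝ) - 1) / D ≤ ((m:ℝ) - 2) / D :=
              (div_le_div_iff_of_pos_right hDpos).mpr (by linarith)
            linarith
          calc ∑ i ∈ Finset.Icc 1 (m-1), 2 * (((i:ℝ) - 1) / D)
              ≤ (Finset.Icc 1 (m-1)).card • (2 * (((m:ℝ) - 2) / D)) :=
                Finset.sum_le_card_nsmul _ _ _ hb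
            _ = ((m:ℝ) - 1) * (2 * (((m:ℝ) - 2) / D)) := by
                rw [Nat.card_Icc]
                have : (m - 1 + 1 - 1 : ℕ) = m - 1 := by omega
                rw [this, nsmul_eq_mul, hcast]
            _ ≤ 2 := by
                have heq : ((m:ℝ) - 1) * (2 * (((m:ℝ) - 2) / D)) = (((m:ℝ) - 2) * ((m:ℝ) - 1) * 2) / D := by
                  ring
                rw [heq, div_le_iff₀ hDpos]
                nlinarith
        simp only [Finset.sum_neg_distrib]
        linarith
    _ = ∏ i ∈ Finset.Icc 1 (m-1), Real.exp (-(2 * (((i:ℝ) - 1) / D))) := Real.exp_sum _ _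
    _ ≤ ∏ i ∈ Finset.Icc 1 (m-1), (1 - ((i:ℝ) - 1) / D) := by
        apply Finset.prod_le_prod
        · intro i _; positivity
        · intro i hi
          obtain ⟨h0, h2⟩ := hx i hi
          exact aux_exp_bound _ h0 h2
end

section
/- Define T_W: ℕ → ℝ by T_W(n) ≤ n·(m+1)·T_W(m) + c_W·n² for n ≥ 16 where m = ⌈√n⌉, with T_W(n) ≤ c_W for n < 16. Then for all n ≥ 16, T_W(n) ≤ c_W · n⁵ · log₂² n. -/
lemma aux_logsq (L Lm : ℝ) (h0 : 0 ≤ Lm) (h1 : Lm ≤ 1 + L / 2) (h4 : 4 ≤ L) :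
    Lm^2 ≤ (9/16) * L^2 := by nlinarith [sq_nonneg (L - 4)]

lemma aux_fin (cW x y z : ℝ) (hc : 0 < cW) (h1 : z ≤ x) (h2 : 16 * x ≤ y) (hx : 0 ≤ x) :
    cW * ((9375/2048) * (9/16)) * x + cW * z ≤ cW * y := by
  nlinarith [mul_le_mul_of_nonneg_left h1 hc.le, mul_le_mul_of_nonneg_left h2 hc.le,
    mul_nonneg hc.le hx]

set_option maxHeartbeats 1600000 in
theorem stmt_13 (cW : ℝ) (hcW : 1 < cW) (T : ℕ → ℝ) (hT : ∀ n, 0 ≤ T n)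
    (hsmall : ∀ n : ℕ, n < 16 → T n ≤ cW)
    (hrec : ∀ n : ℕ, 16 ≤ n →
      T n ≤ (n : ℝ) * ((⌈Real.sqrt n⌉₊ : ℝ) + 1) * T ⌈Real.sqrt n⌉₊ + cW * (n : ℝ) ^ 2) :
    ∀ n : ℕ, 16 ≤ n → T n ≤ cW * (n : ℝ) ^ 5 * (Real.logb 2 n) ^ 2 := by
  intro n
  induction n using Nat.strong_induction_on with
  | _ n ih =>
  intro hn
  have hcW0 : (0:ℝ) < cW := by linarith
  have hn16 : (16:ℝ) ≤ (n:ℝ) := by exact_mod_cast hn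
  have hn0 : (0:ℝ) ≤ (n:ℝ) := by linarith
  have hTn := hrec n hn
  set m : ℕ := ⌈Real.sqrt n⌉₊ with hmdef
  set s : ℝ := Real.sqrt n with hsdef
  have hs4 : (4:ℝ) ≤ s := by
    have h1 : Real.sqrt 16 ≤ s := Real.sqrt_le_sqrt hn16
    have h16 : Real.sqrt 16 = 4 := by
      rw [show (16:ℝ) = 4^2 by norm_num, Real.sqrt_sq (by norm_num)]
    linarith
  have hs0 : (0:ℝ) < s := by linarith
  have hsq : s * s = (n:ℝ) := Real.mul_self_sqrt hn0
  have hmle : (m:ℝ) ≤ s + 1 := le_of_lt (Nat.ceil_lt_add_one hs0.le)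
  have hmge : s ≤ (m:ℝ) := Nat.le_ceil s
  have hsn : s ≤ (n:ℝ) / 4 := by nlinarith
  have hmn : m < n := by
    have : (m:ℝ) < (n:ℝ) := by linarith
    exact_mod_cast this
  -- log bounds
  set L : ℝ := Real.logb 2 n with hLdef
  have hlog16 : Real.logb 2 16 = 4 := by
    rw [show (16:ℝ) = 2^(4:ℕ) by norm_num, Real.logb_pow, Real.logb_self_eq_one (by norm_num)]
    norm_num
  have hL4 : (4:ℝ) ≤ L := by
    have h := Real.logb_le_logb_of_le (by norm_num : (1:ℝ) < 2) (by norm_num : (0:ℝ) < 16) hn16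
    rw [hlog16] at h; rw [hLdef]; exact h
  have hL216 : (16:ℝ) ≤ L^2 := by nlinarith
  have hn24 : (n:ℝ)^2 ≤ (n:ℝ)^4 :=
    pow_le_pow_right₀ (by linarith : (1:ℝ) ≤ (n:ℝ)) (by norm_num)
  clear_value s L m
  rcases lt_or_ge m 16 with hm16 | hm16
  · -- small case
    have hTm : T m ≤ cW := hsmall m hm16
    have hm15 : (m:ℝ) + 1 ≤ 16 := by
      have : (m:ℝ) ≤ 15 := by exact_mod_cast Nat.lt_succ_iff.mp hm16
      linarith
    have h1 : (n:ℝ) * ((m:ℝ) + 1) * T m ≤ (n:ℝ) * (16 * cW) := by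
      rw [mul_assoc]
      exact mul_le_mul_of_nonneg_left
        (mul_le_mul hm15 hTm (hT m) (by norm_num)) hn0
    have h16n : 16 * (n:ℝ) ≤ (n:ℝ)^2 := by nlinarith
    have h2 : T n ≤ 2 * cW * (n:ℝ)^2 := by
      nlinarith [mul_le_mul_of_nonneg_left h16n hcW0.le]
    have hcube : (16:ℝ)^3 ≤ (n:ℝ)^3 := pow_le_pow_left₀ (by norm_num) hn16 3
    have hA : 2 * (n:ℝ)^2 ≤ (n:ℝ)^5 := by
      nlinarith [mul_le_mul_of_nonneg_left hcube (sq_nonneg (n:ℝ))]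
    have hB : (n:ℝ)^5 ≤ (n:ℝ)^5 * L^2 :=
      le_mul_of_one_le_right (by positivity) (by linarith)
    have := mul_le_mul_of_nonneg_left (hA.trans hB) hcW0.le
    calc T n ≤ 2 * cW * (n:ℝ)^2 := h2
      _ ≤ cW * (n:ℝ)^5 * L^2 := by linarith [this]
  · -- recursive case
    have hTm := ih m hmn hm16
    set Lm : ℝ := Real.logb 2 m with hLmdef
    have hm0 : (0:ℝ) < (m:ℝ) := by linarith
    have hLm0 : 0 ≤ Lm := Real.logb_nonneg (by norm_num) (by linarith)
    have hLmle : Lm ≤ 1 + L / 2 := by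
      have h2s : (m:ℝ) ≤ 2 * s := by linarith
      have hle : Lm ≤ Real.logb 2 (2 * s) := by
        rw [hLmdef]
        exact Real.logb_le_logb_of_le (by norm_num) hm0 h2s
      have hmul : Real.logb 2 (2 * s) = 1 + Real.logb 2 s := by
        rw [Real.logb_mul (by norm_num) (ne_of_gt hs0), Real.logb_self_eq_one (by norm_num)]
      have hhalf : Real.logb 2 s = L / 2 := by
        rw [hsdef, hLdef, Real.logb, Real.logb, Real.log_sqrt hn0]; ring
      rw [hmul, hhalf] at hle
      exact hle
    clear_value Lm
    have hLm2 : Lm^2 ≤ (9/16) * L^2 := aux_logsq L Lm hLm0 hLmle hL4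
    have hmb : (m:ℝ) ≤ (5/4) * s := by linarith
    have hmb2 : (m:ℝ) + 1 ≤ (3/2) * s := by linarith
    have hm5 : (m:ℝ)^5 ≤ (5/4)^5 * s^5 := by
      calc (m:ℝ)^5 ≤ ((5/4) * s)^5 := pow_le_pow_left₀ (by positivity) hmb 5
        _ = (5/4)^5 * s^5 := by ring
    have hs6 : s^6 = (n:ℝ)^3 := by
      rw [show s^6 = (s*s)^3 from by ring, hsq]
    have key : ((m:ℝ) + 1) * (m:ℝ)^5 ≤ (9375/2048) * (n:ℝ)^3 := by
      have h := mul_le_mul hmb2 hm5 (by positivity) (by positivity)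
      have he : (3/2 * s) * ((5/4)^5 * s^5) = (9375/2048) * s^6 := by ring
      rw [he, hs6] at h
      exact h
    have keyA : ((m:ℝ) + 1) * (m:ℝ)^5 * Lm^2 ≤ ((9375/2048) * (n:ℝ)^3) * ((9/16) * L^2) :=
      mul_le_mul key hLm2 (sq_nonneg Lm) (by positivity)
    have step1 : (n:ℝ) * ((m:ℝ) + 1) * T m ≤ (n:ℝ) * ((m:ℝ) + 1) * (cW * (m:ℝ)^5 * Lm^2) :=
      mul_le_mul_of_nonneg_left hTm (by positivity)
    have step2 : (n:ℝ) * ((m:ℝ) + 1) * (cW * (m:ℝ)^5 * Lm^2)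
        ≤ cW * (n:ℝ) * (((9375/2048) * (n:ℝ)^3) * ((9/16) * L^2)) := by
      have h := mul_le_mul_of_nonneg_left keyA (by positivity : (0:ℝ) ≤ cW * (n:ℝ))
      calc (n:ℝ) * ((m:ℝ) + 1) * (cW * (m:ℝ)^5 * Lm^2)
          = cW * (n:ℝ) * (((m:ℝ) + 1) * (m:ℝ)^5 * Lm^2) := by ring
        _ ≤ cW * (n:ℝ) * (((9375/2048) * (n:ℝ)^3) * ((9/16) * L^2)) := h
    have hx0 : (0:ℝ) ≤ (n:ℝ)^4 * L^2 := by positivity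
    have h1 : (n:ℝ)^2 ≤ (n:ℝ)^4 * L^2 :=
      hn24.trans (le_mul_of_one_le_right (by positivity) (by linarith))
    have h2 : 16 * ((n:ℝ)^4 * L^2) ≤ (n:ℝ)^5 * L^2 := by
      have := mul_le_mul_of_nonneg_left hn16 hx0
      calc 16 * ((n:ℝ)^4 * L^2) = (n:ℝ)^4 * L^2 * 16 := by ring
        _ ≤ (n:ℝ)^4 * L^2 * (n:ℝ) := this
        _ = (n:ℝ)^5 * L^2 := by ring
    have hfin : cW * (n:ℝ) * (((9375/2048) * (n:ℝ)^3) * ((9/16) * L^2)) + cW * (n:ℝ)^2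
        ≤ cW * (n:ℝ)^5 * L^2 := by
      have := aux_fin cW ((n:ℝ)^4 * L^2) ((n:ℝ)^5 * L^2) ((n:ℝ)^2) hcW0 h1 h2 hx0
      linarith [this]
    calc T n ≤ (n:ℝ) * ((m:ℝ) + 1) * T m + cW * (n:ℝ)^2 := hTn
      _ ≤ cW * (n:ℝ) * (((9375/2048) * (n:ℝ)^3) * ((9/16) * L^2)) + cW * (n:ℝ)^2 := by
          linarith [step1, step2]
      _ ≤ cW * (n:ℝ)^5 * L^2 := hfin
end
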